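/- arXiv:1706.00554 — 4 statements merged into one kernel-verified Lean document; each statement's English description precedes it below -/
import Mathlib

section
/- Let A be a separable unital C*-algebra and let H be a separable Hilbert space. Then the set WM(A,H) of weakly mixing representations is a Gδ subset of Rep(A,H) in the point-strong operator topology. -/
open scoped InnerProductSpace

noncomputable section

/-- The space of unital representations of `A` on `H`, i.e. unital `*`-homomorphisms
`A → B(H)`. -/
abbrev CRep (A H : Type*) [CStarAlgebra A] [NormedAddCommGroup H]
    [InnerProductSpace ℂ H] [CompleteSpace H] : Type _ :=
  A →⋆ₐ[ℂ] (H →L[ℂ] H)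

/-- The point-strong operator topology on `CRep A H`: the topology of pointwise convergence
with `B(H)` carrying the strong operator topology (i.e. pointwise convergence on vectors). -/
instance CRep.instTopologicalSpace (A H : Type*) [CStarAlgebra A] [NormedAddCommGroup H]
    [InnerProductSpace ℂ H] [CompleteSpace H] : TopologicalSpace (CRep A H) :=
  TopologicalSpace.induced (fun π => (fun (a : A) (x : H) => π a x)) inferInstance

/-- A closed subspace `K` is invariant under a unital representation `π`. -/
def CRepInvariant {A H : Type*} [CStarAlgebra A] [NormedAddCommGroup H]
    [InnerProductSpace ℂ H] [CompleteSpace H]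
    (π : CRep A H) (K : Submodule ℂ H) : Prop :=
  ∀ a : A, ∀ x ∈ K, π a x ∈ K

/-- A unital representation is weakly mixing if it admits no nonzero finite-dimensional
closed invariant subspace. -/
def CRepWeaklyMixing {A H : Type*} [CStarAlgebra A] [NormedAddCommGroup H]
    [InnerProductSpace ℂ H] [CompleteSpace H]
    (π : CRep A H) : Prop :=
  ∀ K : Submodule ℂ H, IsClosed (K : Set H) → FiniteDimensional ℂ K →
    CRepInvariant π K → K = ⊥

/-! ### Auxiliary material for the proof -/

/-- The closed unit ball of the weak-star dual of `H`. -/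
abbrev WMBall (H : Type*) [NormedAddCommGroup H] [InnerProductSpace ℂ H] : Type _ :=
  (WeakDual.toStrongDual ⁻¹' Metric.closedBall (0 : StrongDual ℂ H) 1 :
    Set (WeakDual ℂ H))

instance WMBall.instCompactSpace (H : Type*) [NormedAddCommGroup H] [InnerProductSpace ℂ H] :
    CompactSpace (WMBall H) :=
  isCompact_iff_compactSpace.mp
    (WeakDual.isCompact_closedBall (0 : StrongDual ℂ H) 1)

lemma WMBall.norm_le_one {H : Type*} [NormedAddCommGroup H] [InnerProductSpace ℂ H]
    (f : WMBall H) : ‖WeakDual.toStrongDual (f : WeakDual ℂ H)‖ ≤ 1 := by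
  have h := f.2
  rw [Set.mem_preimage, Metric.mem_closedBall, dist_zero_right] at h
  exact h

/-- Joint continuity of evaluation on the unit ball of the weak dual. -/
lemma WMBall.continuous_eval {H : Type*} [NormedAddCommGroup H] [InnerProductSpace ℂ H] :
    Continuous (fun p : WMBall H × H => (p.1 : WeakDual ℂ H) p.2) := by
  rw [continuous_iff_continuousAt]
  rintro ⟨f₀, h₀⟩
  have h1 : Filter.Tendsto (fun p : WMBall H × H => (p.1 : WeakDual ℂ H) (p.2 - h₀))
      (nhds (f₀, h₀)) (nhds 0) := by
    refine squeeze_zero_norm (a := fun p : WMBall H × H => ‖p.2 - h₀‖) (fun p => ?_) ?_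
    · calc ‖(p.1 : WeakDual ℂ H) (p.2 - h₀)‖
          = ‖WeakDual.toStrongDual (p.1 : WeakDual ℂ H) (p.2 - h₀)‖ := rfl
        _ ≤ ‖WeakDual.toStrongDual (p.1 : WeakDual ℂ H)‖ * ‖p.2 - h₀‖ :=
            ContinuousLinearMap.le_opNorm _ _
        _ ≤ 1 * ‖p.2 - h₀‖ := by
            gcongr
            exact WMBall.norm_le_one p.1
        _ = ‖p.2 - h₀‖ := one_mul _
    · have hc : Continuous (fun p : WMBall H × H => ‖p.2 - h₀‖) :=
        (continuous_snd.sub continuous_const).norm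
      have := hc.tendsto (f₀, h₀)
      simpa using this
  have h2 : Filter.Tendsto (fun p : WMBall H × H => (p.1 : WeakDual ℂ H) h₀)
      (nhds (f₀, h₀)) (nhds ((f₀ : WeakDual ℂ H) h₀)) := by
    have hc : Continuous (fun p : WMBall H × H => (p.1 : WeakDual ℂ H) h₀) :=
      (WeakDual.eval_continuous h₀).comp (continuous_subtype_val.comp continuous_fst)
    exact hc.tendsto _
  have h3 := h1.add h2
  rw [zero_add] at h3
  have heq : (fun p : WMBall H × H => (p.1 : WeakDual ℂ H) p.2)
      = fun p : WMBall H × H =>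
          (p.1 : WeakDual ℂ H) (p.2 - h₀) + (p.1 : WeakDual ℂ H) h₀ := by
    funext p
    rw [map_sub]
    ring
  have h4 : Filter.Tendsto (fun p : WMBall H × H => (p.1 : WeakDual ℂ H) p.2)
      (nhds (f₀, h₀)) (nhds ((f₀ : WeakDual ℂ H) h₀)) := by
    rw [heq]; exact h3
  exact h4

section Bad

variable {A H : Type*} [CStarAlgebra A] [NormedAddCommGroup H]
  [InnerProductSpace ℂ H] [CompleteSpace H]

/-- Evaluation `π ↦ π a x` is continuous on `CRep A H`. -/
lemma CRep.continuous_apply' (a : A) (x : H) :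
    Continuous (fun π : CRep A H => π a x) := by
  have h : Continuous (fun π : CRep A H => (fun (a : A) (x : H) => π a x)) :=
    continuous_induced_dom
  exact (continuous_apply x).comp ((continuous_apply a).comp h)

variable (A H) in
/-- The set of representations admitting `n` vectors (encoded as functionals in the weak-dual
unit ball) such that the associated positive finite-rank operator commutes with the
representation and has expectation at least `1/2` at `ξ`. -/
def CRepBad (n : ℕ) (ξ : H) : Set (CRep A H) :=
  Prod.snd '' {q : (Fin n → WMBall H) × CRep A H |
    (∀ (a : A) (x y : H),
      (∑ i, (q.1 i : WeakDual ℂ H) x *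
          (starRingEnd ℂ) ((q.1 i : WeakDual ℂ H) (q.2 (star a) y)))
        = ∑ i, (q.1 i : WeakDual ℂ H) (q.2 a x) *
            (starRingEnd ℂ) ((q.1 i : WeakDual ℂ H) y)) ∧
    (1/2 : ℝ) ≤ ∑ i, ‖(q.1 i : WeakDual ℂ H) ξ‖ ^ 2}

lemma isClosed_cRepBad (n : ℕ) (ξ : H) : IsClosed (CRepBad A H n ξ) := by
  have h1 : IsClosed {q : (Fin n → WMBall H) × CRep A H |
      ∀ (a : A) (x y : H),
        (∑ i, (q.1 i : WeakDual ℂ H) x *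
            (starRingEnd ℂ) ((q.1 i : WeakDual ℂ H) (q.2 (star a) y)))
          = ∑ i, (q.1 i : WeakDual ℂ H) (q.2 a x) *
              (starRingEnd ℂ) ((q.1 i : WeakDual ℂ H) y)} := by
    have heq : {q : (Fin n → WMBall H) × CRep A H |
        ∀ (a : A) (x y : H),
          (∑ i, (q.1 i : WeakDual ℂ H) x *
              (starRingEnd ℂ) ((q.1 i : WeakDual ℂ H) (q.2 (star a) y)))
            = ∑ i, (q.1 i : WeakDual ℂ H) (q.2 a x) *
                (starRingEnd ℂ) ((q.1 i : WeakDual ℂ H) y)}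
        = ⋂ (a : A), ⋂ (x : H), ⋂ (y : H),
            {q : (Fin n → WMBall H) × CRep A H |
              (∑ i, (q.1 i : WeakDual ℂ H) x *
                  (starRingEnd ℂ) ((q.1 i : WeakDual ℂ H) (q.2 (star a) y)))
                = ∑ i, (q.1 i : WeakDual ℂ H) (q.2 a x) *
                    (starRingEnd ℂ) ((q.1 i : WeakDual ℂ H) y)} := by
      ext q
      simp only [Set.mem_setOf_eq, Set.mem_iInter]
    rw [heq]
    refine isClosed_iInter fun a => isClosed_iInter fun x => isClosed_iInter fun y =>
      isClosed_eq ?_ ?_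
    · refine continuous_finset_sum _ fun i _ => Continuous.mul ?_ ?_
      · exact (WeakDual.eval_continuous x).comp
          (continuous_subtype_val.comp ((continuous_apply i).comp continuous_fst))
      · have hpair : Continuous (fun q : (Fin n → WMBall H) × CRep A H =>
            ((q.1 i, q.2 (star a) y) : WMBall H × H)) :=
          ((continuous_apply i).comp continuous_fst).prodMk
            ((CRep.continuous_apply' (star a) y).comp continuous_snd)
        have hc : Continuous (fun q : (Fin n → WMBall H) × CRep A H =>
            (q.1 i : WeakDual ℂ H) (q.2 (star a) y)) :=
          WMBall.continuous_eval.comp hpair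
        exact continuous_star.comp hc
    · refine continuous_finset_sum _ fun i _ => Continuous.mul ?_ ?_
      · have hpair : Continuous (fun q : (Fin n → WMBall H) × CRep A H =>
            ((q.1 i, q.2 a x) : WMBall H × H)) :=
          ((continuous_apply i).comp continuous_fst).prodMk
            ((CRep.continuous_apply' a x).comp continuous_snd)
        exact WMBall.continuous_eval.comp hpair
      · exact continuous_star.comp ((WeakDual.eval_continuous y).comp
          (continuous_subtype_val.comp ((continuous_apply i).comp continuous_fst)))
  have h2 : IsClosed {q : (Fin n → WMBall H) × CRep A H |
      (1/2 : ℝ) ≤ ∑ i, ‖(q.1 i : WeakDual ℂ H) ξ‖ ^ 2} := by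
    have hc : Continuous (fun q : (Fin n → WMBall H) × CRep A H =>
        ∑ i, ‖(q.1 i : WeakDual ℂ H) ξ‖ ^ 2) := by
      refine continuous_finset_sum _ fun i _ => ?_
      exact (((WeakDual.eval_continuous ξ).comp
        (continuous_subtype_val.comp
          ((continuous_apply i).comp continuous_fst))).norm).pow 2
    exact isClosed_le continuous_const hc
  exact isClosedMap_snd_of_compactSpace _ (h1.inter h2)

/-- The adjoint identity for representations. -/
lemma CRep.inner_adjoint (π : CRep A H) (a : A) (y z : H) :
    ⟪y, π a z⟫_ℂ = ⟪π (star a) y, z⟫_ℂ := by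
  have h1 : π (star a) = ContinuousLinearMap.adjoint (π a) := by
    rw [← ContinuousLinearMap.star_eq_adjoint, ← map_star]
  rw [h1, ContinuousLinearMap.adjoint_inner_left]

/-- A representation in a bad set is not weakly mixing. -/
lemma not_weaklyMixing_of_mem_cRepBad {n : ℕ} {ξ : H} {π : CRep A H}
    (hπ : π ∈ CRepBad A H n ξ) : ¬ CRepWeaklyMixing π := by
  obtain ⟨q, ⟨hE, hB⟩, rfl⟩ := hπ
  set F : Fin n → (H →L[ℂ] ℂ) := fun i => WeakDual.toStrongDual (q.1 i : WeakDual ℂ H) with hF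
  set v : Fin n → H := fun i => (InnerProductSpace.toDual ℂ H).symm (F i) with hv
  have hFv : ∀ i x, ⟪v i, x⟫_ℂ = (q.1 i : WeakDual ℂ H) x := by
    intro i x
    have h1 : InnerProductSpace.toDual ℂ H (v i) = F i :=
      (InnerProductSpace.toDual ℂ H).apply_symm_apply (F i)
    calc ⟪v i, x⟫_ℂ = InnerProductSpace.toDual ℂ H (v i) x :=
          (InnerProductSpace.toDual_apply_apply).symm
      _ = F i x := by rw [h1]
      _ = (q.1 i : WeakDual ℂ H) x := rfl
  set T : H →L[ℂ] H := ∑ i, (F i).smulRight (v i) with hT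
  have hTapp : ∀ x, T x = ∑ i, (q.1 i : WeakDual ℂ H) x • v i := by
    intro x
    rw [hT, ContinuousLinearMap.sum_apply]
    refine Finset.sum_congr rfl fun i _ => ?_
    rw [ContinuousLinearMap.smulRight_apply]
    rfl
  have hconj : ∀ (i : Fin n) (z : H),
      (starRingEnd ℂ) ((q.1 i : WeakDual ℂ H) z) = ⟪z, v i⟫_ℂ := by
    intro i z
    rw [← hFv i z, inner_conj_symm]
  have hinnerT : ∀ (y x : H), ⟪y, T x⟫_ℂ
      = ∑ i, (q.1 i : WeakDual ℂ H) x *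
          (starRingEnd ℂ) ((q.1 i : WeakDual ℂ H) y) := by
    intro y x
    rw [hTapp, inner_sum]
    refine Finset.sum_congr rfl fun i _ => ?_
    rw [inner_smul_right, hconj i y]
  have hcomm : ∀ (a : A) (x : H), q.2 a (T x) = T (q.2 a x) := by
    intro a x
    apply ext_inner_left ℂ
    intro y
    have lhs : ⟪y, q.2 a (T x)⟫_ℂ
        = ∑ i, (q.1 i : WeakDual ℂ H) x *
            (starRingEnd ℂ) ((q.1 i : WeakDual ℂ H) (q.2 (star a) y)) := by
      rw [hTapp, map_sum, inner_sum]
      refine Finset.sum_congr rfl fun i _ => ?_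
      rw [map_smul, inner_smul_right, hconj i (q.2 (star a) y)]
      congr 1
      exact CRep.inner_adjoint q.2 a y (v i)
    rw [lhs, hE a x y, ← hinnerT]
  -- the invariant subspace
  set K : Submodule ℂ H := LinearMap.range (T : H →ₗ[ℂ] H) with hK
  have hKle : K ≤ Submodule.span ℂ (Set.range v) := by
    rintro z ⟨x, rfl⟩
    show T x ∈ _
    rw [hTapp]
    exact Submodule.sum_mem _ fun i _ =>
      Submodule.smul_mem _ _ (Submodule.subset_span (Set.mem_range_self i))
  haveI : FiniteDimensional ℂ (Submodule.span ℂ (Set.range v)) :=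
    FiniteDimensional.span_of_finite ℂ (Set.finite_range v)
  haveI hfd : FiniteDimensional ℂ K := Submodule.finiteDimensional_of_le hKle
  have hclosed : IsClosed (K : Set H) := Submodule.closed_of_finiteDimensional K
  have hinv : CRepInvariant q.2 K := by
    rintro a z ⟨x, rfl⟩
    exact ⟨q.2 a x, (hcomm a x).symm⟩
  intro hwm
  have hbot := hwm K hclosed hfd hinv
  have hTξ : ⟪T ξ, ξ⟫_ℂ = ((∑ i, ‖(q.1 i : WeakDual ℂ H) ξ‖ ^ 2 : ℝ) : ℂ) := by
    rw [hTapp, sum_inner]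
    push_cast
    refine Finset.sum_congr rfl fun i _ => ?_
    rw [inner_smul_left, hFv i ξ, RCLike.conj_mul]
    norm_cast
  have hne : T ξ ≠ 0 := by
    intro h0
    rw [h0, inner_zero_left] at hTξ
    have : (∑ i, ‖(q.1 i : WeakDual ℂ H) ξ‖ ^ 2 : ℝ) = 0 := by
      exact_mod_cast hTξ.symm
    rw [this] at hB
    norm_num at hB
  have hmem : T ξ ∈ K := ⟨ξ, rfl⟩
  rw [hbot, Submodule.mem_bot] at hmem
  exact hne hmem

/-- If `π` has a nonzero finite-dimensional closed invariant subspace `K` and `ξ` is close to a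
unit vector of `K`, then `π` lies in the corresponding bad set. -/
lemma mem_cRepBad_of_subrep {π : CRep A H} {K : Submodule ℂ H}
    (hfd : FiniteDimensional ℂ K) (hinv : CRepInvariant π K)
    {u ξ : H} (hu : u ∈ K) (hu1 : ‖u‖ = 1) (hξ : ‖ξ - u‖ ≤ 1/4) :
    π ∈ CRepBad A H (Module.finrank ℂ K) ξ := by
  haveI := hfd
  haveI : CompleteSpace K := FiniteDimensional.complete ℂ K
  set n := Module.finrank ℂ K with hn
  set b := stdOrthonormalBasis ℂ K with hb
  set v : Fin n → H := fun i => (b i : H) with hv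
  have hvK : ∀ i, v i ∈ K := fun i => (b i).2
  have hv1 : ∀ i, ‖v i‖ = 1 := fun i => b.orthonormal.1 i
  set f : Fin n → WeakDual ℂ H :=
    fun i => StrongDual.toWeakDual (InnerProductSpace.toDual ℂ H (v i)) with hf
  have hfv : ∀ i x, (f i : WeakDual ℂ H) x = ⟪v i, x⟫_ℂ := by
    intro i x
    exact InnerProductSpace.toDual_apply_apply
  have hconj : ∀ (i : Fin n) (z : H),
      (starRingEnd ℂ) ((f i : WeakDual ℂ H) z) = ⟪z, v i⟫_ℂ := by
    intro i z
    rw [hfv i z, inner_conj_symm]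
  have hfmem : ∀ i, f i ∈
      (WeakDual.toStrongDual ⁻¹' Metric.closedBall (0 : StrongDual ℂ H) 1 :
        Set (WeakDual ℂ H)) := by
    intro i
    have h1 : WeakDual.toStrongDual (f i) = InnerProductSpace.toDual ℂ H (v i) := rfl
    simp only [Set.mem_preimage, Metric.mem_closedBall, dist_zero_right, h1]
    rw [(InnerProductSpace.toDual ℂ H).norm_map, hv1 i]
  -- the orthogonal projection onto K
  set P : H →L[ℂ] H := K.subtypeL.comp K.orthogonalProjectionOnto with hP
  have hPapp : ∀ x, P x = ∑ i, ⟪v i, x⟫_ℂ • v i := by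
    intro x
    have h1 := b.orthogonalProjectionOnto_apply_eq_sum x
    calc P x = ((K.orthogonalProjectionOnto x : K) : H) := rfl
      _ = ∑ i, ⟪v i, x⟫_ℂ • v i := by
          rw [h1]
          push_cast
          rfl
  have hPmem : ∀ x, P x ∈ K := fun x => (K.orthogonalProjectionOnto x).2
  have hPfix : ∀ w ∈ K, P w = w := by
    intro w hw
    show ((K.orthogonalProjectionOnto w : K) : H) = w
    exact Submodule.starProjection_eq_self_iff.mpr hw
  have hPorth : ∀ x, x - P x ∈ Kᗮ := fun x => K.sub_starProjection_mem_orthogonal x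
  have hPzero : ∀ z ∈ Kᗮ, P z = 0 := by
    intro z hz
    show ((K.orthogonalProjectionOnto z : K) : H) = 0
    rw [Submodule.orthogonalProjectionOnto_apply_of_mem_orthogonal hz]
    rfl
  have hstarinv : ∀ (a : A), ∀ z ∈ Kᗮ, π a z ∈ Kᗮ := by
    intro a z hz
    rw [Submodule.mem_orthogonal]
    intro w hw
    rw [CRep.inner_adjoint π a w z]
    exact (Submodule.mem_orthogonal K z).1 hz _ (hinv (star a) w hw)
  have hcommP : ∀ (a : A) (x : H), π a (P x) = P (π a x) := by
    intro a x
    have hx : π a x = π a (P x) + π a (x - P x) := by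
      rw [← map_add]
      congr 1
      abel
    have h1 : P (π a (P x)) = π a (P x) := hPfix _ (hinv a _ (hPmem x))
    have h2 : P (π a (x - P x)) = 0 := hPzero _ (hstarinv a _ (hPorth x))
    rw [hx, map_add, h1, h2, add_zero]
  refine ⟨(fun i => ⟨f i, hfmem i⟩, π), ⟨?_, ?_⟩, rfl⟩
  · -- the commutation condition
    intro a x y
    have hL : (∑ i, (f i : WeakDual ℂ H) x *
        (starRingEnd ℂ) ((f i : WeakDual ℂ H) (π (star a) y)))
        = ⟪y, π a (P x)⟫_ℂ := by
      rw [hPapp, map_sum, inner_sum]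
      refine (Finset.sum_congr rfl fun i _ => ?_).symm
      rw [hfv, hconj i (π (star a) y)]
      rw [map_smul, inner_smul_right]
      congr 1
      exact CRep.inner_adjoint π a y (v i)
    have hR : (∑ i, (f i : WeakDual ℂ H) (π a x) *
        (starRingEnd ℂ) ((f i : WeakDual ℂ H) y))
        = ⟪y, P (π a x)⟫_ℂ := by
      rw [hPapp, inner_sum]
      refine (Finset.sum_congr rfl fun i _ => ?_).symm
      rw [hfv, hconj i y, inner_smul_right]
    show (∑ i, (f i : WeakDual ℂ H) x *
        (starRingEnd ℂ) ((f i : WeakDual ℂ H) (π (star a) y)))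
        = ∑ i, (f i : WeakDual ℂ H) (π a x) *
            (starRingEnd ℂ) ((f i : WeakDual ℂ H) y)
    rw [hL, hR, hcommP a x]
  · -- the largeness condition
    show (1/2 : ℝ) ≤ ∑ i, ‖(f i : WeakDual ℂ H) ξ‖ ^ 2
    have key1 : ⟪P ξ, ξ⟫_ℂ = ((∑ i, ‖(f i : WeakDual ℂ H) ξ‖ ^ 2 : ℝ) : ℂ) := by
      rw [hPapp, sum_inner]
      push_cast
      refine Finset.sum_congr rfl fun i _ => ?_
      rw [inner_smul_left, ← hfv i ξ, RCLike.conj_mul]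
      norm_cast
    have key2 : ⟪P ξ, ξ⟫_ℂ = ((‖P ξ‖ ^ 2 : ℝ) : ℂ) := by
      have hdec : ⟪P ξ, ξ⟫_ℂ = ⟪P ξ, P ξ⟫_ℂ + ⟪P ξ, ξ - P ξ⟫_ℂ := by
        rw [← inner_add_right]
        congr 1
        abel
      rw [hdec, Submodule.inner_right_of_mem_orthogonal (hPmem ξ) (hPorth ξ), add_zero,
        inner_self_eq_norm_sq_to_K]
      norm_cast
    have hsum : (∑ i, ‖(f i : WeakDual ℂ H) ξ‖ ^ 2 : ℝ) = ‖P ξ‖ ^ 2 := by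
      have := key1.symm.trans key2
      exact_mod_cast this
    rw [hsum]
    -- norm estimates
    have hPu : P u = u := hPfix u hu
    have hPle : ‖P (u - ξ)‖ ≤ ‖u - ξ‖ := by
      have h1 : ‖K.orthogonalProjectionOnto (u - ξ)‖ ≤ 1 * ‖u - ξ‖ :=
        ContinuousLinearMap.le_of_opNorm_le _ (Submodule.orthogonalProjectionOnto_norm_le K) _
      calc ‖P (u - ξ)‖ = ‖K.orthogonalProjectionOnto (u - ξ)‖ := rfl
        _ ≤ 1 * ‖u - ξ‖ := h1
        _ = ‖u - ξ‖ := one_mul _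
    have huξ : ‖u - ξ‖ ≤ 1/4 := by
      rw [norm_sub_rev]
      exact hξ
    have hsplit : P u = P ξ + P (u - ξ) := by
      rw [← map_add]
      congr 1
      abel
    have h34 : (3/4 : ℝ) ≤ ‖P ξ‖ := by
      have h1 : ‖P u‖ ≤ ‖P ξ‖ + ‖P (u - ξ)‖ := by
        rw [hsplit]
        exact norm_add_le _ _
      rw [hPu, hu1] at h1
      linarith [hPle.trans huξ]
    nlinarith [norm_nonneg (P ξ)]

end Bad

/-- for a separable unital C*-algebra `A` and a separable Hilbert space `H`,
the set of weakly mixing representations is a Gδ subset of `CRep(A,H)` in the point-strong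
operator topology. -/
theorem isGδ_weaklyMixing
    (A H : Type*) [CStarAlgebra A] [TopologicalSpace.SeparableSpace A]
    [NormedAddCommGroup H] [InnerProductSpace ℂ H] [CompleteSpace H]
    [TopologicalSpace.SeparableSpace H] :
    IsGδ {π : CRep A H | CRepWeaklyMixing π} := by
  haveI : Nonempty H := ⟨0⟩
  set d := TopologicalSpace.denseSeq H with hd'
  have hd : DenseRange d := TopologicalSpace.denseRange_denseSeq H
  have hset : {π : CRep A H | CRepWeaklyMixing π}
      = ⋂ (p : ℕ × ℕ), (CRepBad A H p.1 (d p.2))ᶜ := by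
    ext π
    simp only [Set.mem_setOf_eq, Set.mem_iInter, Set.mem_compl_iff]
    constructor
    · intro hwm p hp
      exact not_weaklyMixing_of_mem_cRepBad hp hwm
    · intro h K hcl hfd hinv
      by_contra hKne
      obtain ⟨u₀, hu₀K, hu₀⟩ := K.ne_bot_iff.mp hKne
      set u : H := (‖u₀‖⁻¹ : ℂ) • u₀ with hu'
      have huK : u ∈ K := K.smul_mem _ hu₀K
      have hu1 : ‖u‖ = 1 := norm_smul_inv_norm hu₀
      obtain ⟨j, hj⟩ := Metric.denseRange_iff.mp hd u (1/4) (by norm_num)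
      have hdist : ‖d j - u‖ ≤ 1/4 := by
        rw [← dist_eq_norm]
        rw [dist_comm]
        exact le_of_lt hj
      exact h (Module.finrank ℂ K, j)
        (mem_cRepBad_of_subrep hfd hinv huK hu1 hdist)
  rw [hset]
  exact IsGδ.iInter fun p => ((isClosed_cRepBad p.1 (d p.2)).isOpen_compl).isGδ
end
end

section
/- Let A be a unital C*-algebra and let H be a nonzero finite-dimensional Hilbert space. Then the set Irr(A,H) of irreducible representations is open in Rep(A,H) in the point-strong operator topology. Equivalently, if a sequence {π_k} in Rep(A,H) of non-irreducible representations converges pointwise in the strong operator topology to π ∈ Rep(A,H), then π is not irreducible. -/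
open scoped InnerProductSpace

noncomputable section

/-- A unital representation is irreducible if its only closed invariant subspaces are `⊥`
and the whole space. -/
def CRepIrreducible {A H : Type*} [CStarAlgebra A] [NormedAddCommGroup H]
    [InnerProductSpace ℂ H] [CompleteSpace H] (π : CRep A H) : Prop :=
  ∀ K : Submodule ℂ H, IsClosed (K : Set H) → (∀ a : A, ∀ x ∈ K, π a x ∈ K) →
    K = ⊥ ∨ K = ⊤

section Aux

variable {H : Type*} [NormedAddCommGroup H] [InnerProductSpace ℂ H] [CompleteSpace H]
  [FiniteDimensional ℂ H]

lemma embedding_clm_coeFn :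
    Topology.IsEmbedding (fun T : H →L[ℂ] H => (T : H → H)) := by
  set e : (H →L[ℂ] H) →ₗ[ℂ] (H → H) :=
    { toFun := fun T => ⇑T
      map_add' := fun S T => rfl
      map_smul' := fun c T => rfl } with he
  have hinj : Function.Injective e := fun S T h => DFunLike.coe_injective h
  set M : Submodule ℂ (H → H) := LinearMap.range e with hM
  let E : (H →L[ℂ] H) ≃ₗ[ℂ] M := LinearEquiv.ofInjective e hinj
  have hfd : FiniteDimensional ℂ M := Module.Finite.equiv E
  have hcont_fwd : Continuous (fun T : H →L[ℂ] H => (e T : H → H)) :=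
    continuous_pi fun x => (ContinuousLinearMap.apply ℂ H x).continuous
  have hcont_E : Continuous (fun T : H →L[ℂ] H => (E T : M)) :=
    hcont_fwd.subtype_mk _
  have hcont_symm : Continuous (E.symm.toLinearMap : M →ₗ[ℂ] (H →L[ℂ] H)) :=
    LinearMap.continuous_of_finiteDimensional _
  let h : (H →L[ℂ] H) ≃ₜ M :=
    { E.toEquiv with continuous_toFun := hcont_E, continuous_invFun := hcont_symm }
  have heq : (fun T : H →L[ℂ] H => (T : H → H)) = Subtype.val ∘ h := by
    funext T; rfl
  rw [heq]
  exact Topology.IsEmbedding.subtypeVal.comp h.isEmbedding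

omit [FiniteDimensional ℂ H] in
lemma norm_sa_idem_eq_one {P : H →L[ℂ] H} (h1 : P * P = P) (h2 : star P = P)
    (h0 : P ≠ 0) : ‖P‖ = 1 := by
  have h := CStarRing.norm_star_mul_self (x := P)
  rw [h2, h1] at h
  have hn : ‖P‖ ≠ 0 := norm_ne_zero_iff.mpr h0
  have : ‖P‖ * ‖P‖ = 1 * ‖P‖ := by rw [← h]; ring
  exact mul_right_cancel₀ hn this

end Aux

/-- for a unital C*-algebra `A` and a nonzero finite-dimensional Hilbert space
`H`, the set of irreducible representations is open in `Rep(A,H)` in the point-strong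
operator topology. -/
theorem isOpen_irreducible
    (A H : Type*) [CStarAlgebra A] [NormedAddCommGroup H]
    [InnerProductSpace ℂ H] [CompleteSpace H] [FiniteDimensional ℂ H] [Nontrivial H] :
    IsOpen {π : CRep A H | CRepIrreducible π} := by
  rw [← isClosed_compl_iff]
  -- the compact set of nontrivial self-adjoint projections
  set C : Set (H →L[ℂ] H) :=
    {P | P * P = P ∧ star P = P ∧ ‖P‖ = 1 ∧ ‖1 - P‖ = 1} with hC
  have hCclosed : IsClosed C := by
    have h1 : IsClosed {P : H →L[ℂ] H | P * P = P} :=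
      isClosed_eq (continuous_id.mul continuous_id) continuous_id
    have h2 : IsClosed {P : H →L[ℂ] H | star P = P} :=
      isClosed_eq continuous_star continuous_id
    have h3 : IsClosed {P : H →L[ℂ] H | ‖P‖ = 1} :=
      isClosed_eq continuous_norm continuous_const
    have h4 : IsClosed {P : H →L[ℂ] H | ‖1 - P‖ = 1} :=
      isClosed_eq (continuous_const.sub continuous_id).norm continuous_const
    have heq : C = ({P : H →L[ℂ] H | P * P = P} ∩ {P | star P = P}) ∩
        ({P | ‖P‖ = 1} ∩ {P | ‖1 - P‖ = 1}) := by
      ext P; simp only [hC, Set.mem_setOf_eq, Set.mem_inter_iff]; tauto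
    rw [heq]
    exact (h1.inter h2).inter (h3.inter h4)
  have hCb : IsCompact C := by
    have hsub : C ⊆ Metric.closedBall 0 1 := by
      intro P hP
      simp [Metric.mem_closedBall, dist_zero_right, hP.2.2.1.le]
    exact (isCompact_closedBall (0 : H →L[ℂ] H) 1).of_isClosed_subset hCclosed hsub
  have : CompactSpace C := isCompact_iff_compactSpace.mp hCb
  -- evaluation at a point is continuous into the *norm* topology
  have heval : ∀ a : A, Continuous (fun π : CRep A H => π a) := by
    intro a
    rw [(embedding_clm_coeFn (H := H)).continuous_iff]
    have h1 : Continuous (fun π : CRep A H => (fun a x => π a x)) := continuous_induced_dom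
    exact (continuous_apply a).comp h1
  have key : {π : CRep A H | CRepIrreducible π}ᶜ =
      Prod.snd '' {p : C × CRep A H |
        ∀ a : A, (p.1 : H →L[ℂ] H) * (p.2 a * (p.1 : H →L[ℂ] H)) = p.2 a * (p.1 : H →L[ℂ] H)} := by
    ext π
    simp only [Set.mem_compl_iff, Set.mem_setOf_eq, Set.mem_image, Prod.exists, Subtype.exists]
    constructor
    · intro hred
      rw [CRepIrreducible] at hred
      push_neg at hred
      obtain ⟨K, hKcl, hKinv, hKbot, hKtop⟩ := hred
      haveI : CompleteSpace K := FiniteDimensional.complete ℂ K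
      set P : H →L[ℂ] H := K.subtypeL ∘L K.orthogonalProjectionOnto with hPdef
      have hPmem : ∀ x : H, P x ∈ K := fun x => (K.orthogonalProjectionOnto x).2
      have hPfix : ∀ x ∈ K, P x = x := by
        intro x hx
        exact congrArg (Subtype.val) (Submodule.orthogonalProjectionOnto_mem_subspace_eq_self (⟨x, hx⟩ : K))
      have hidem : P * P = P := by
        ext x
        exact hPfix _ (hPmem x)
      have hsa : star P = P := isSelfAdjoint_starProjection K
      have hPne : P ≠ 0 := by
        obtain ⟨x, hx, hx0⟩ := K.ne_bot_iff.mp hKbot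
        intro h
        apply hx0
        rw [← hPfix x hx, h]; rfl
      have hPne1 : (1 : H →L[ℂ] H) - P ≠ 0 := by
        intro h
        apply hKtop
        rw [Submodule.eq_top_iff']
        intro x
        have h0 : x - P x = 0 := by
          simpa using congrFun (congrArg DFunLike.coe h) x
        rw [show x = P x from sub_eq_zero.mp h0]
        exact hPmem x
      have hidem1 : ((1 : H →L[ℂ] H) - P) * (1 - P) = 1 - P := by
        rw [sub_mul, mul_sub, mul_sub, one_mul, mul_one, hidem]
        abel
      have hsa1 : star ((1 : H →L[ℂ] H) - P) = 1 - P := by rw [star_sub, star_one, hsa]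
      refine ⟨P, ⟨hidem, hsa, norm_sa_idem_eq_one hidem hsa hPne,
        norm_sa_idem_eq_one hidem1 hsa1 hPne1⟩, π, ?_, rfl⟩
      intro a
      ext x
      exact hPfix _ (hKinv a (P x) (hPmem x))
    · rintro ⟨P, ⟨hidem, hsa, hn1, hn2⟩, π', hinv, rfl⟩
      intro hirr
      set K : Submodule ℂ H := LinearMap.range (P : H →ₗ[ℂ] H) with hK
      have hmem : ∀ x : H, P x ∈ K := fun x => ⟨x, rfl⟩
      have hfix : ∀ x ∈ K, P x = x := by
        rintro x ⟨y, rfl⟩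
        exact congrFun (congrArg DFunLike.coe hidem) y
      have hKcl : IsClosed (K : Set H) := K.closed_of_finiteDimensional
      have hKinv : ∀ a : A, ∀ x ∈ K, π' a x ∈ K := by
        rintro a x ⟨y, rfl⟩
        have h := congrFun (congrArg DFunLike.coe (hinv a)) y
        simp only [ContinuousLinearMap.mul_apply] at h
        exact ⟨_, h⟩
      rcases hirr K hKcl hKinv with h | h
      · apply norm_ne_zero_iff.mp (show ‖P‖ ≠ 0 by rw [hn1]; norm_num)
        ext x
        have hx : P x ∈ (⊥ : Submodule ℂ H) := h ▸ hmem x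
        simpa using hx
      · apply norm_ne_zero_iff.mp (show ‖(1 : H →L[ℂ] H) - P‖ ≠ 0 by rw [hn2]; norm_num)
        ext x
        have hx : x ∈ K := h ▸ Submodule.mem_top
        simp [ContinuousLinearMap.sub_apply, hfix x hx]
  rw [key]
  apply isClosedMap_snd_of_compactSpace
  have heq2 : {p : C × CRep A H |
      ∀ a : A, (p.1 : H →L[ℂ] H) * (p.2 a * (p.1 : H →L[ℂ] H)) = p.2 a * (p.1 : H →L[ℂ] H)} =
      ⋂ a : A, {p : C × CRep A H |
        (p.1 : H →L[ℂ] H) * (p.2 a * (p.1 : H →L[ℂ] H)) = p.2 a * (p.1 : H →L[ℂ] H)} := by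
    ext p; simp [Set.mem_iInter]
  rw [heq2]
  apply isClosed_iInter
  intro a
  exact isClosed_eq
    ((continuous_subtype_val.comp continuous_fst).mul
      (((heval a).comp continuous_snd).mul (continuous_subtype_val.comp continuous_fst)))
    (((heval a).comp continuous_snd).mul (continuous_subtype_val.comp continuous_fst))
end
end

section
/- Let A be a separable unital C*-algebra, let H be a separable Hilbert space, and let {ρ_n} be a sequence in Rep(A,H) converging in the point-strong operator topology to π ∈ Rep(A,H). Then π ≺ ⊕_{n=1}^∞ ρ_n, where ⊕_{n=1}^∞ ρ_n is the direct sum representation on the Hilbert space direct sum of countably many copies of H. -/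
open scoped InnerProductSpace

noncomputable section

/-- The weak containment relation `π ≺ ρ`. -/
def CRepPrec {A H K : Type*} [CStarAlgebra A] [NormedAddCommGroup H]
    [InnerProductSpace ℂ H] [CompleteSpace H] [NormedAddCommGroup K]
    [InnerProductSpace ℂ K] [CompleteSpace K]
    (π : CRep A H) (ρ : CRep A K) : Prop :=
  ∀ (Ω : Finset A) (n : ℕ) (ξ : Fin n → H), Orthonormal ℂ ξ → ∀ ε : ℝ, 0 < ε →
    ∃ ζ : Fin n → K, Orthonormal ℂ ζ ∧
      ∀ a ∈ Ω, ∀ i : Fin n, ‖⟪π a (ξ i), ξ i⟫_ℂ - ⟪ρ a (ζ i), ζ i⟫_ℂ‖ < ε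


/-- `σ` realizes the Hilbert space direct sum of the family of representations `ρ i` via the
isometries `u i`: the ranges of the `u i` are pairwise orthogonal with dense span, and each
`u i` intertwines `ρ i` with `σ`. -/
def IsDirectSumRep {A K : Type*} [CStarAlgebra A] [NormedAddCommGroup K]
    [InnerProductSpace ℂ K] [CompleteSpace K]
    {ι : Type*} {Hs : ι → Type*} [∀ i, NormedAddCommGroup (Hs i)]
    [∀ i, InnerProductSpace ℂ (Hs i)] [∀ i, CompleteSpace (Hs i)]
    (σ : CRep A K) (ρ : ∀ i, CRep A (Hs i))
    (u : ∀ i, Hs i →ₗᵢ[ℂ] K) : Prop :=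
  (∀ i j, i ≠ j → ∀ (x : Hs i) (y : Hs j), ⟪u i x, u j y⟫_ℂ = 0) ∧
  (⨆ i, LinearMap.range (u i).toLinearMap).topologicalClosure = ⊤ ∧
  (∀ i (a : A) (x : Hs i), σ a (u i x) = u i (ρ i a x))

/-- if a sequence `ρ_n` in `Rep(A,H)` converges in the point-strong operator
topology to `π`, then `π ≺ ⊕_{n} ρ_n`, the direct sum acting on the Hilbert space direct sum
of countably many copies of `H`. -/
theorem prec_directSum_of_tendsto
    (A H : Type*) [CStarAlgebra A] [TopologicalSpace.SeparableSpace A]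
    [NormedAddCommGroup H] [InnerProductSpace ℂ H] [CompleteSpace H]
    [TopologicalSpace.SeparableSpace H]
    (ρ : ℕ → CRep A H) (π : CRep A H)
    (hconv : Filter.Tendsto ρ Filter.atTop (nhds π))
    {K : Type*} [NormedAddCommGroup K] [InnerProductSpace ℂ K] [CompleteSpace K]
    (σ : CRep A K) (u : ℕ → (H →ₗᵢ[ℂ] K))
    (hds : IsDirectSumRep (Hs := fun _ : ℕ => H) σ ρ u) :
    CRepPrec π σ := by
  intro Ω n ξ hξ ε hε
  -- pointwise strong convergence
  have hpt : ∀ (a : A) (x : H), Filter.Tendsto (fun m => ρ m a x) Filter.atTop (nhds (π a x)) := by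
    intro a x
    have h1 : Filter.Tendsto (fun m => (fun (a : A) (x : H) => ρ m a x)) Filter.atTop
        (nhds (fun (a : A) (x : H) => π a x)) := by
      rw [CRep.instTopologicalSpace, nhds_induced, Filter.tendsto_comap_iff] at hconv
      exact hconv
    have h2 := (tendsto_pi_nhds.1 h1) a
    exact (tendsto_pi_nhds.1 h2) x
  -- choose m large
  have hev : ∀ᶠ m in Filter.atTop, ∀ a ∈ Ω, ∀ i : Fin n, ‖π a (ξ i) - ρ m a (ξ i)‖ < ε := by
    rw [Filter.eventually_all_finset]
    intro a ha
    rw [Filter.eventually_all]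
    intro i
    have := (hpt a (ξ i)).sub_const (π a (ξ i))
    rw [sub_self] at this
    have := (this.norm).eventually (gt_mem_nhds (by simpa using hε))
    filter_upwards [this] with m hm
    simpa [norm_sub_rev] using hm
  obtain ⟨m, hm⟩ := hev.exists
  refine ⟨fun i => u m (ξ i), hξ.comp_linearIsometry (u m), ?_⟩
  intro a ha i
  have hint := hds.2.2 m a (ξ i)
  have hinner : ⟪σ a (u m (ξ i)), u m (ξ i)⟫_ℂ = ⟪ρ m a (ξ i), ξ i⟫_ℂ := by
    rw [hint, (u m).inner_map_map]
  rw [hinner]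
  have h1 : ⟪π a (ξ i), ξ i⟫_ℂ - ⟪ρ m a (ξ i), ξ i⟫_ℂ = ⟪π a (ξ i) - ρ m a (ξ i), ξ i⟫_ℂ := by
    rw [inner_sub_left]
  rw [h1]
  calc ‖⟪π a (ξ i) - ρ m a (ξ i), ξ i⟫_ℂ‖ ≤ ‖π a (ξ i) - ρ m a (ξ i)‖ * ‖ξ i‖ :=
        norm_inner_le_norm _ _
    _ = ‖π a (ξ i) - ρ m a (ξ i)‖ := by rw [hξ.1 i, mul_one]
    _ < ε := hm a ha i
end
end

section
/- Let A be a separable unital C*-algebra admitting a finite-dimensional irreducible unital representation, and let H be a separable infinite-dimensional Hilbert space. Then the complement of WM(A,H) is dense in Rep(A,H) in the point-strong operator topology; that is, every π ∈ Rep(A,H) is a point-strong limit of representations in Rep(A,H) that are not weakly mixing. -/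
open scoped InnerProductSpace

noncomputable section

section Aux

lemma aux_countable_of_orthonormal {E ι : Type*} [NormedAddCommGroup E]
    [InnerProductSpace ℂ E] [TopologicalSpace.SeparableSpace E] {v : ι → E}
    (hv : Orthonormal ℂ v) : Countable ι := by
  have key : ∀ i j : ι, i ≠ j → (1:ℝ)/2 + 1/2 ≤ dist (v i) (v j) := by
    intro i j hij
    have h2 : ‖v i - v j‖ ^ 2 = 2 := by
      rw [@norm_sub_sq ℂ]
      simp [hv.1 i, hv.1 j, hv.2 hij]; norm_num
    rw [dist_eq_norm]
    nlinarith [norm_nonneg (v i - v j)]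
  exact Pairwise.countable_of_isOpen_disjoint (s := fun i => Metric.ball (v i) (1/2))
    (fun i j hij => Metric.ball_disjoint_ball (key i j hij)) (fun i => Metric.isOpen_ball)
    (fun i => ⟨v i, Metric.mem_ball_self (by norm_num)⟩)

lemma aux_exists_hilbertBasis_nat (E : Type*) [NormedAddCommGroup E]
    [InnerProductSpace ℂ E] [CompleteSpace E] [TopologicalSpace.SeparableSpace E]
    (h : ¬ FiniteDimensional ℂ E) : Nonempty (HilbertBasis ℕ ℂ E) := by
  obtain ⟨w, b, hb⟩ := exists_hilbertBasis ℂ E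
  haveI : Countable w := aux_countable_of_orthonormal b.orthonormal
  haveI : Infinite w := by
    rw [← not_finite_iff_infinite]
    intro hfin
    have hwfin : (Set.range (⇑b)).Finite := by
      rw [hb, Subtype.range_coe]
      exact Set.toFinite w
    haveI hfd : FiniteDimensional ℂ (Submodule.span ℂ (Set.range ⇑b)) :=
      FiniteDimensional.span_of_finite ℂ hwfin
    have hcl : IsClosed ((Submodule.span ℂ (Set.range ⇑b)) : Set E) :=
      Submodule.closed_of_finiteDimensional _
    have htop : Submodule.span ℂ (Set.range ⇑b) = ⊤ := by
      have := b.dense_span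
      rwa [hcl.submodule_topologicalClosure_eq] at this
    exact h (by rw [htop] at hfd; exact Module.Finite.equiv Submodule.topEquiv)
  obtain ⟨d⟩ := nonempty_denumerable w
  let e : ℕ ≃ w := (Denumerable.eqv w).symm
  refine ⟨HilbertBasis.mk (b.orthonormal.comp e e.injective) ?_⟩
  have hr : Set.range (⇑b ∘ ⇑e) = Set.range ⇑b := e.surjective.range_comp ⇑b
  rw [hr, b.dense_span]

set_option maxHeartbeats 2000000 in
open ContinuousLinearMap in
theorem aux_key {A H : Type*} [CStarAlgebra A] [NormedAddCommGroup H] [InnerProductSpace ℂ H]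
    [CompleteSpace H] [TopologicalSpace.SeparableSpace H] (hH : ¬ FiniteDimensional ℂ H)
    {n : ℕ} (hn : 0 < n) (ρ : CRep A (EuclideanSpace ℂ (Fin n))) (π : CRep A H)
    (W : Submodule ℂ H) (hWfd : FiniteDimensional ℂ ↥W) :
    ∃ π' : CRep A H, (¬ CRepWeaklyMixing π') ∧
      ∀ a : A, ∀ x, x ∈ W → π a x ∈ W → π' a x = π a x := by
  classical
  haveI := hWfd
  -- `Wᗮ` is infinite dimensional
  have hWp : ¬ FiniteDimensional ℂ ↥Wᗮ := by
    intro hfin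
    haveI := hfin
    have h1 : FiniteDimensional ℂ ↥(W ⊔ Wᗮ) := Submodule.finiteDimensional_sup W Wᗮ
    rw [Submodule.sup_orthogonal_of_hasOrthogonalProjection] at h1
    exact hH (Module.Finite.equiv Submodule.topEquiv)
  haveI : SecondCountableTopology H := UniformSpace.secondCountable_of_separable H
  obtain ⟨b⟩ := aux_exists_hilbertBasis_nat ↥Wᗮ hWp
  set g : ℕ → H := fun k => ((b k : ↥Wᗮ) : H) with hg
  have hgmem : ∀ k, g k ∈ Wᗮ := fun k => (b k).2
  have hgo : Orthonormal ℂ g := by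
    rw [orthonormal_iff_ite]
    intro i j
    have hb := b.orthonormal
    rw [orthonormal_iff_ite] at hb
    have h2 := hb i j
    rw [Submodule.coe_inner] at h2
    exact h2
  -- the shift isometry on `Wᗮ`
  have hinj : Function.Injective (fun k : ℕ => n + k) := fun a b h => by
    simp only [add_right_inj] at h; exact h
  have hbo' : Orthonormal ℂ (⇑b ∘ fun k => n + k) := b.orthonormal.comp _ hinj
  set σ : ↥Wᗮ →ₗᵢ[ℂ] ↥Wᗮ :=
    (hbo'.orthogonalFamily.linearIsometry).comp b.repr.toLinearIsometry with hσ
  have hσapp : ∀ z, σ z = hbo'.orthogonalFamily.linearIsometry (b.repr z) := fun z => rfl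
  have hσb : ∀ k, σ (b k) = b (n + k) := by
    intro k
    rw [hσapp, b.repr_self]
    simp
  have hσinner : ∀ (i : ℕ), i < n → ∀ z : ↥Wᗮ, ⟪b i, σ z⟫_ℂ = 0 := by
    intro i hi z
    have hs := hbo'.orthogonalFamily.hasSum_linearIsometry (b.repr z)
    have hs2 := (innerSL ℂ (b i)).hasSum hs
    have hz : ∀ k : ℕ, (innerSL ℂ (b i))
        ((LinearIsometry.toSpanSingleton ℂ _ (hbo'.1 k)) ((b.repr z) k)) = 0 := by
      intro k
      simp [LinearIsometry.toSpanSingleton_apply, inner_smul_right]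
      refine Or.inr ?_
      have h0 : (⟪b i, b (n + k)⟫_ℂ) = 0 := b.orthonormal.2 (by omega)
      simpa using h0
    rw [← hσapp] at hs2
    simp only [hz] at hs2
    simpa using hs2.unique hasSum_zero
  -- the isometries `V : H → H` and `J : ℂⁿ → H`
  set P : H →L[ℂ] ↥W := W.orthogonalProjectionOnto with hP
  set Q : H →L[ℂ] ↥Wᗮ := Wᗮ.orthogonalProjectionOnto with hQ
  set V : H →L[ℂ] H := W.subtypeL.comp P + Wᗮ.subtypeL.comp (σ.toContinuousLinearMap.comp Q)
    with hVdef
  have hVapp : ∀ x, V x = ((P x : H)) + ((σ (Q x) : H)) := fun x => rfl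
  have hVx : ∀ x ∈ W, V x = x := by
    intro x hx
    have h1 : ((P x : H)) = x := W.starProjection_eq_self_iff.mpr hx
    have h2 : Q x = 0 :=
      Submodule.orthogonalProjectionOnto_apply_of_mem_orthogonal
        (Submodule.le_orthogonal_orthogonal W hx)
    rw [hVapp, h1, h2]
    simp
  have hVg : ∀ k, V (g k) = g (n + k) := by
    intro k
    have h1 : P (g k) = 0 :=
      Submodule.orthogonalProjectionOnto_apply_of_mem_orthogonal (hgmem k)
    have h2 : Q (g k) = b k := Submodule.orthogonalProjectionOnto_mem_subspace_eq_self (b k)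
    rw [hVapp, h1, h2, hσb]
    simp [hg]
  have hVinner : ∀ x y : H, ⟪V x, V y⟫_ℂ = ⟪x, y⟫_ℂ := by
    intro x y
    rw [hVapp, hVapp, inner_add_left, inner_add_right, inner_add_right]
    have c1 : ⟪((P x : H)), ((σ (Q y) : H))⟫_ℂ = 0 :=
      Submodule.inner_right_of_mem_orthogonal (P x).2 (σ (Q y)).2
    have c2 : ⟪((σ (Q x) : H)), ((P y : H))⟫_ℂ = 0 :=
      Submodule.inner_left_of_mem_orthogonal (P y).2 (σ (Q x)).2
    have d2 : ⟪((σ (Q x) : H)), ((σ (Q y) : H))⟫_ℂ = ⟪((Q x : H)), ((Q y : H))⟫_ℂ := by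
      rw [← Submodule.coe_inner, ← Submodule.coe_inner, σ.inner_map_map]
    conv_rhs => rw [← (show ((W.orthogonalProjectionOnto x : H)) + (Wᗮ.orthogonalProjectionOnto x : H) = x from W.starProjection_add_starProjection_orthogonal x),
      ← (show ((W.orthogonalProjectionOnto y : H)) + (Wᗮ.orthogonalProjectionOnto y : H) = y from W.starProjection_add_starProjection_orthogonal y)]
    rw [inner_add_left, inner_add_right, inner_add_right]
    have c3 : ⟪((P x : H)), ((Q y : H))⟫_ℂ = 0 :=
      Submodule.inner_right_of_mem_orthogonal (P x).2 (Q y).2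
    have c4 : ⟪((Q x : H)), ((P y : H))⟫_ℂ = 0 :=
      Submodule.inner_left_of_mem_orthogonal (P y).2 (Q x).2
    rw [c1, c2, c3, c4, d2]
  have hgVinner : ∀ (i : Fin n) (x : H), ⟪g i, V x⟫_ℂ = 0 := by
    intro i x
    rw [hVapp, inner_add_right]
    have h1 : ⟪g (i : ℕ), ((P x : H))⟫_ℂ = 0 :=
      Submodule.inner_left_of_mem_orthogonal (P x).2 (hgmem i)
    have h2 : ⟪g (i : ℕ), ((σ (Q x) : H))⟫_ℂ = ⟪b (i : ℕ), σ (Q x)⟫_ℂ :=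
      (Submodule.coe_inner _ _ _).symm
    rw [h1, h2, hσinner i i.isLt, add_zero]
  -- J
  set Jlin : EuclideanSpace ℂ (Fin n) →ₗ[ℂ] H :=
    { toFun := fun y => ∑ i : Fin n, y i • g i
      map_add' := by
        intro y z
        simp [PiLp.add_apply, add_smul, Finset.sum_add_distrib]
      map_smul' := by
        intro c y
        simp [PiLp.smul_apply, smul_smul, Finset.smul_sum] } with hJlin
  have hgo' : Orthonormal ℂ (fun i : Fin n => g i) := hgo.comp Fin.val Fin.val_injective
  have hJlininner : ∀ y z, ⟪Jlin y, Jlin z⟫_ℂ = ⟪y, z⟫_ℂ := by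
    intro y z
    have h1 := hgo'.inner_sum (fun i : Fin n => y i) (fun i : Fin n => z i) Finset.univ
    have h2 : ⟪Jlin y, Jlin z⟫_ℂ = ∑ i : Fin n, (starRingEnd ℂ) (y i) * z i := h1
    rw [h2, PiLp.inner_apply]
    simp [RCLike.inner_apply, mul_comm]
  set J : EuclideanSpace ℂ (Fin n) →L[ℂ] H :=
    (Jlin.isometryOfInner hJlininner).toContinuousLinearMap with hJdef
  have hJapp : ∀ y, J y = ∑ i : Fin n, y i • g i := fun y => rfl
  have hJinner : ∀ y z, ⟪J y, J z⟫_ℂ = ⟪y, z⟫_ℂ := hJlininner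
  have hJsingle : ∀ i : Fin n, J (EuclideanSpace.single i (1:ℂ)) = g i := by
    intro i
    rw [hJapp]
    rw [Finset.sum_eq_single i]
    · simp [EuclideanSpace.single_apply]
    · intro j _ hj
      simp [EuclideanSpace.single_apply, hj]
    · simp
  have hJW : ∀ (y : EuclideanSpace ℂ (Fin n)) (x : H), x ∈ W → ⟪J y, x⟫_ℂ = 0 := by
    intro y x hx
    rw [hJapp, sum_inner]
    refine Finset.sum_eq_zero fun i _ => ?_
    rw [inner_smul_left, Submodule.inner_left_of_mem_orthogonal hx (hgmem i), mul_zero]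
  have hJV : ∀ (y : EuclideanSpace ℂ (Fin n)) (x : H), ⟪J y, V x⟫_ℂ = 0 := by
    intro y x
    rw [hJapp, sum_inner]
    exact Finset.sum_eq_zero fun i _ => by rw [inner_smul_left, hgVinner i x, mul_zero]
  -- adjoints
  set J' : H →L[ℂ] EuclideanSpace ℂ (Fin n) := ContinuousLinearMap.adjoint J with hJ'def
  set V' : H →L[ℂ] H := ContinuousLinearMap.adjoint V with hV'def
  have hJ'J : ∀ y, J' (J y) = y := fun y =>
    ext_inner_left ℂ fun v => by rw [ContinuousLinearMap.adjoint_inner_right, hJinner]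
  have hV'V : ∀ x, V' (V x) = x := fun x =>
    ext_inner_left ℂ fun v => by rw [ContinuousLinearMap.adjoint_inner_right, hVinner]
  have hJ'V : ∀ x, J' (V x) = 0 := fun x =>
    ext_inner_left ℂ fun v => by
      rw [ContinuousLinearMap.adjoint_inner_right, hJV, inner_zero_right]
  have hV'J : ∀ y, V' (J y) = 0 := fun y =>
    ext_inner_left ℂ fun v => by
      rw [ContinuousLinearMap.adjoint_inner_right, inner_zero_right, ← inner_conj_symm,
        hJV, map_zero]
  have hJ'W : ∀ x ∈ W, J' x = 0 := fun x hx =>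
    ext_inner_left ℂ fun v => by
      rw [ContinuousLinearMap.adjoint_inner_right, hJW _ _ hx, inner_zero_right]
  have hV'W : ∀ x ∈ W, V' x = x := fun x hx =>
    ext_inner_left ℂ fun v => by
      rw [ContinuousLinearMap.adjoint_inner_right]
      conv_lhs => rw [← hVx x hx]
      rw [hVinner]
  -- completeness relation
  set S : Set H := (W : Set H) ∪ Set.range g with hS
  have hdense : Dense ((Submodule.span ℂ S : Submodule ℂ H) : Set H) := by
    intro x
    have hsum := (show ((W.orthogonalProjectionOnto x : H)) + (Wᗮ.orthogonalProjectionOnto x : H) = x from W.starProjection_add_starProjection_orthogonal x)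
    have h1 : ((P x : H)) ∈ (Submodule.span ℂ S).topologicalClosure :=
      Submodule.le_topologicalClosure _ (Submodule.subset_span (Or.inl (P x).2))
    have h2 : ((Q x : H)) ∈ (Submodule.span ℂ S).topologicalClosure := by
      have hd := b.dense_span
      have h3 : (Q x) ∈ (Submodule.span ℂ (Set.range ⇑b)).topologicalClosure := by
        rw [hd]; trivial
      rw [← SetLike.mem_coe, Submodule.topologicalClosure_coe] at h3
      rw [← SetLike.mem_coe, Submodule.topologicalClosure_coe]
      refine map_mem_closure continuous_subtype_val h3 ?_
      intro v hv
      have hmem : (v : H) ∈ Submodule.map Wᗮ.subtype (Submodule.span ℂ (Set.range ⇑b)) :=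
        ⟨v, hv, rfl⟩
      rw [Submodule.map_span] at hmem
      rw [SetLike.mem_coe]
      refine Submodule.span_mono ?_ hmem
      rintro _ ⟨_, ⟨k, rfl⟩, rfl⟩
      exact Or.inr ⟨k, rfl⟩
    have hmem : x ∈ (Submodule.span ℂ S).topologicalClosure := by
      rw [← hsum]
      exact Submodule.add_mem _ h1 h2
    rw [← SetLike.mem_coe, Submodule.topologicalClosure_coe] at hmem
    exact hmem
  have h5 : J.comp J' + V.comp V' = ContinuousLinearMap.id ℂ H := by
    refine ContinuousLinearMap.ext_on hdense ?_
    intro x hx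
    rcases hx with hxW | ⟨k, rfl⟩
    · simp only [ContinuousLinearMap.add_apply, ContinuousLinearMap.coe_comp',
        Function.comp_apply, ContinuousLinearMap.coe_id', id_eq]
      rw [hJ'W x hxW, map_zero, hV'W x hxW, hVx x hxW, zero_add]
    · simp only [ContinuousLinearMap.add_apply, ContinuousLinearMap.coe_comp',
        Function.comp_apply, ContinuousLinearMap.coe_id', id_eq]
      rcases lt_or_ge k n with hk | hk
      · have hgk : J (EuclideanSpace.single (⟨k, hk⟩ : Fin n) 1) = g k := hJsingle ⟨k, hk⟩
        rw [← hgk, hJ'J, hV'J, map_zero, add_zero]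
      · have hgk : g k = V (g (k - n)) := by
          rw [hVg (k - n)]
          congr 1
          omega
        rw [hgk, hJ'V, map_zero, zero_add, hV'V]
  -- the perturbed representation
  set Φ : A → (H →L[ℂ] H) :=
    fun a => (J.comp ((ρ a).comp J')) + (V.comp ((π a).comp V')) with hΦ
  have hΦapp : ∀ a x, Φ a x = J (ρ a (J' x)) + V (π a (V' x)) := fun a x => rfl
  have hΦone : Φ 1 = 1 := by
    ext x
    rw [ContinuousLinearMap.one_apply, hΦapp, map_one, map_one,
      ContinuousLinearMap.one_apply, ContinuousLinearMap.one_apply]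
    have := congrArg (fun (T : H →L[ℂ] H) => T x) h5
    simpa using this
  have hΦmul : ∀ a c : A, Φ (a * c) = Φ a * Φ c := by
    intro a c
    ext x
    rw [ContinuousLinearMap.mul_apply, hΦapp, hΦapp, hΦapp]
    simp only [map_add, hJ'J, hJ'V, hV'J, hV'V, add_zero, zero_add, map_zero, map_mul,
      ContinuousLinearMap.mul_apply]
  have hΦstar : ∀ a : A, Φ (star a) = star (Φ a) := by
    intro a
    rw [ContinuousLinearMap.star_eq_adjoint, ContinuousLinearMap.eq_adjoint_iff]
    intro x y
    rw [hΦapp, hΦapp, inner_add_left, inner_add_right]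
    have e2 : ∀ u w, ⟪(ρ (star a)) u, w⟫_ℂ = ⟪u, (ρ a) w⟫_ℂ := by
      intro u w
      have hρ : ρ (star a) = ContinuousLinearMap.adjoint (ρ a) := by
        rw [← ContinuousLinearMap.star_eq_adjoint, map_star]
      rw [hρ, ContinuousLinearMap.adjoint_inner_left]
    have e2' : ∀ u w, ⟪(π (star a)) u, w⟫_ℂ = ⟪u, (π a) w⟫_ℂ := by
      intro u w
      have hπ : π (star a) = ContinuousLinearMap.adjoint (π a) := by
        rw [← ContinuousLinearMap.star_eq_adjoint, map_star]
      rw [hπ, ContinuousLinearMap.adjoint_inner_left]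
    have p1 : ⟪J ((ρ (star a)) (J' x)), y⟫_ℂ = ⟪x, J ((ρ a) (J' y))⟫_ℂ := by
      rw [show ⟪J ((ρ (star a)) (J' x)), y⟫_ℂ = ⟪(ρ (star a)) (J' x), J' y⟫_ℂ from
        (ContinuousLinearMap.adjoint_inner_right J _ _).symm, e2,
        hJ'def, ContinuousLinearMap.adjoint_inner_left]
    have p2 : ⟪V ((π (star a)) (V' x)), y⟫_ℂ = ⟪x, V ((π a) (V' y))⟫_ℂ := by
      rw [show ⟪V ((π (star a)) (V' x)), y⟫_ℂ = ⟪(π (star a)) (V' x), V' y⟫_ℂ from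
        (ContinuousLinearMap.adjoint_inner_right V _ _).symm, e2',
        hV'def, ContinuousLinearMap.adjoint_inner_left]
    rw [p1, p2]
  have hΦzero : Φ 0 = 0 := by
    ext x
    rw [hΦapp]
    simp
  have hΦadd : ∀ a c : A, Φ (a + c) = Φ a + Φ c := by
    intro a c
    ext x
    simp only [ContinuousLinearMap.add_apply, hΦapp, ContinuousLinearMap.coe_comp',
      Function.comp_apply, map_add]
    abel
  have hΦsmul : ∀ (c : ℂ) (a : A), Φ (c • a) = c • Φ a := by
    intro c a
    ext x
    simp only [ContinuousLinearMap.smul_apply, hΦapp, ContinuousLinearMap.coe_comp',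
      Function.comp_apply, map_smul, smul_add]
  have hΦalg : ∀ c : ℂ, Φ ((algebraMap ℂ A) c) = (algebraMap ℂ (H →L[ℂ] H)) c := by
    intro c
    rw [Algebra.algebraMap_eq_smul_one, Algebra.algebraMap_eq_smul_one, hΦsmul, hΦone]
  set π' : CRep A H :=
    { toFun := Φ
      map_one' := hΦone
      map_mul' := hΦmul
      map_zero' := hΦzero
      map_add' := hΦadd
      commutes' := hΦalg
      map_star' := hΦstar } with hπ'
  have hπ'app : ∀ a x, π' a x = J ((ρ a) (J' x)) + V ((π a) (V' x)) := fun a x => rfl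
  -- the invariant subspace
  set K : Submodule ℂ H := LinearMap.range (J : EuclideanSpace ℂ (Fin n) →ₗ[ℂ] H) with hK
  haveI hKfd : FiniteDimensional ℂ ↥K := by
    rw [hK]
    infer_instance
  have hKclosed : IsClosed (K : Set H) := Submodule.closed_of_finiteDimensional K
  have hKinv : CRepInvariant π' K := by
    rintro a x ⟨y, rfl⟩
    refine ⟨ρ a y, ?_⟩
    have : π' a (J y) = J (ρ a y) := by
      rw [hπ'app, hJ'J, hV'J, map_zero, map_zero, add_zero]
    simpa using this.symm
  have hKne : K ≠ ⊥ := by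
    intro hbot
    have hmem : g 0 ∈ K := by
      refine ⟨EuclideanSpace.single (⟨0, hn⟩ : Fin n) 1, ?_⟩
      simpa using hJsingle (⟨0, hn⟩ : Fin n)
    rw [hbot, Submodule.mem_bot] at hmem
    have := hgo.1 0
    rw [hmem, norm_zero] at this
    norm_num at this
  refine ⟨π', fun hwm => hKne (hwm K hKclosed hKfd hKinv), ?_⟩
  intro a x hx hπx
  rw [hπ'app, hJ'W x hx, map_zero, map_zero, zero_add, hV'W x hx, hVx _ hπx]

end Aux

/-- if a separable unital C*-algebra `A` admits a finite-dimensional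
irreducible unital representation, then for any separable infinite-dimensional Hilbert
space `H` the non-weakly-mixing representations are dense in `Rep(A,H)` in the point-strong
operator topology. -/
theorem dense_not_weaklyMixing
    (A H : Type*) [CStarAlgebra A] [TopologicalSpace.SeparableSpace A]
    [NormedAddCommGroup H] [InnerProductSpace ℂ H] [CompleteSpace H]
    [TopologicalSpace.SeparableSpace H] (hH : ¬ FiniteDimensional ℂ H)
    (hex : ∃ (n : ℕ) (_ : 0 < n) (ρ : CRep A (EuclideanSpace ℂ (Fin n))),
      CRepIrreducible ρ) :
    Dense {π : CRep A H | ¬ CRepWeaklyMixing π} := by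
  intro π
  rw [mem_closure_iff]
  intro o ho hπo
  rw [isOpen_induced_iff] at ho
  obtain ⟨O, hO, rfl⟩ := ho
  have hfπ : (fun (a : A) (x : H) => π a x) ∈ O := hπo
  obtain ⟨I, u, hIu, hIsub⟩ := isOpen_pi_iff.mp hO _ hfπ
  have hchoice : ∀ a : A, ∃ (Ja : Finset H) (va : H → Set H), a ∈ I →
      ((∀ x ∈ Ja, IsOpen (va x) ∧ π a x ∈ va x) ∧ (↑Ja : Set H).pi va ⊆ u a) := by
    intro a
    by_cases ha : a ∈ I
    · obtain ⟨Ja, va, h1, h2⟩ := isOpen_pi_iff.mp (hIu a ha).1 _ (hIu a ha).2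
      exact ⟨Ja, va, fun _ => ⟨fun x hx => h1 x hx, h2⟩⟩
    · exact ⟨∅, fun _ => ∅, fun h => absurd h ha⟩
  choose Ja va hJa using hchoice
  set T : Set H := ⋃ a ∈ I, ((Ja a : Set H)) with hT
  have hTfin : T.Finite := Set.Finite.biUnion I.finite_toSet (fun a _ => (Ja a).finite_toSet)
  set T2 : Set H := ⋃ a ∈ I, (π a '' T) with hT2
  have hT2fin : T2.Finite := Set.Finite.biUnion I.finite_toSet (fun a _ => hTfin.image _)
  set W : Submodule ℂ H := Submodule.span ℂ (T ∪ T2) with hW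
  haveI hWfd : FiniteDimensional ℂ ↥W := FiniteDimensional.span_of_finite ℂ (hTfin.union hT2fin)
  obtain ⟨n, hn, ρ, -⟩ := hex
  obtain ⟨π', hπ'wm, hπ'eq⟩ := aux_key hH hn ρ π W hWfd
  refine ⟨π', ?_, hπ'wm⟩
  show (fun (a : A) (x : H) => π' a x) ∈ O
  apply hIsub
  rw [Set.mem_pi]
  intro a ha
  apply (hJa a ha).2
  rw [Set.mem_pi]
  intro x hx
  have hxW : x ∈ W := Submodule.subset_span (Or.inl (Set.mem_biUnion ha hx))
  have hπxW : π a x ∈ W :=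
    Submodule.subset_span (Or.inr (Set.mem_biUnion ha ⟨x, Set.mem_biUnion ha hx, rfl⟩))
  have heq := hπ'eq a x hxW hπxW
  show π' a x ∈ va a x
  rw [heq]
  exact ((hJa a ha).1 x hx).2
end
end
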